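/- arXiv:2409.12905 — 3 statements merged into one kernel-verified Lean document; each statement's English description precedes it below -/
import Mathlib

section
/- Let p_N : ℝ^N → ℂ be 2π-periodic in each coordinate (periodic with primitive cell [0,2π]^N), and let K be a real d×N matrix with rank(K) = d. Define p_d(x) = p_N(Kᵀx). If the dimension of the linear span of range(Kᵀ) ∩ (2π)ℤ^N is equal to d, then p_d is periodic, i.e., there exist d linearly independent vectors a₁,…,a_d ∈ ℝ^d such that p_d(x + n₁a₁ + ⋯ + n_d a_d) = p_d(x) for all x ∈ ℝ^d and all integers n₁,…,n_d. -/
open Real Matrix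

/-!
The translations under which a function is invariant form an additive subgroup. For `pN` this
subgroup contains `2π ℤ^N`, and pulling it back along `Kᵀ` shows that every preimage under `Kᵀ`
of a vector of `range Kᵀ ∩ 2π ℤ^N` is a period of `p_d`. A maximal linearly independent family
in `range Kᵀ ∩ 2π ℤ^N` has `d` members, and their preimages are linearly independent because
they stay so after applying `Kᵀ`.
-/

namespace Function

variable {M N α : Type*}

def periods [AddGroup M] (f : M → α) : AddSubgroup M where
  carrier := {c | Periodic f c}
  zero_mem' := fun x => by rw [add_zero]
  add_mem' := Periodic.add_period
  neg_mem' := Periodic.neg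

@[simp]
theorem mem_periods [AddGroup M] {f : M → α} {c : M} : c ∈ periods f ↔ Periodic f c :=
  Iff.rfl

theorem periods_comap_le [AddGroup M] [AddGroup N] (f : N → α) (g : M →+ N) :
    (periods f).comap g ≤ periods (f ∘ g) := fun c hc x => by
  simp only [comp_apply, map_add]
  exact hc (g x)

theorem periodic_intVec_of_periodic_single {ι : Type*} [Fintype ι] [DecidableEq ι]
    {f : (ι → ℝ) → α} {c : ℝ} (h : ∀ j, Periodic f (c • Pi.single j 1)) (n : ι → ℤ) :
    Periodic f (fun j => c * n j) := by
  have hsum : (fun j => c * n j) = ∑ j, n j • (c • Pi.single j 1 : ι → ℝ) := by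
    ext i
    simp [Finset.sum_apply, Pi.single_apply, mul_comm]
  rw [← mem_periods, hsum]
  exact AddSubgroup.sum_mem _ fun j _ => AddSubgroup.zsmul_mem _ (h j) _

end Function

open Function

theorem exists_linearIndependent_fin_of_finrank_span_eq {K V : Type*} [DivisionRing K]
    [AddCommGroup V] [Module K V] [FiniteDimensional K V] (s : Set V) {d : ℕ}
    (h : Module.finrank K (Submodule.span K s) = d) :
    ∃ v : Fin d → V, LinearIndependent K v ∧ ∀ i, v i ∈ s := by
  obtain ⟨b, hbs, hspan, hli⟩ := exists_linearIndependent K s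
  have : Fintype b := hli.setFinite.fintype
  have hcard : Fintype.card b = d := by
    rw [← h, ← hspan, finrank_span_set_eq_card hli, Set.toFinset_card]
  let e : Fin d ≃ b := (Fintype.equivFinOfCardEq hcard).symm
  exact ⟨fun i => e i, hli.comp e e.injective, fun i => hbs (e i).2⟩

theorem stmt_0_general {d N : ℕ} (pN : (Fin N → ℝ) → ℂ)
    (hper : ∀ (y : Fin N → ℝ) (j : Fin N), pN (y + (2 * π) • (Pi.single j 1 : Fin N → ℝ)) = pN y)
    (K : Matrix (Fin d) (Fin N) ℝ)
    (hdim : Module.finrank ℝ (Submodule.span ℝ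
      ({v | (∃ x : Fin d → ℝ, (Kᵀ).mulVec x = v) ∧
        (∃ n : Fin N → ℤ, v = fun j => 2 * π * (n j : ℝ))} : Set (Fin N → ℝ))) = d) :
    ∃ a : Fin d → (Fin d → ℝ), LinearIndependent ℝ a ∧
      ∀ (x : Fin d → ℝ) (n : Fin d → ℤ),
        pN ((Kᵀ).mulVec (x + ∑ j, (n j : ℝ) • a j)) = pN ((Kᵀ).mulVec x) := by
  obtain ⟨v, hv_li, hv_mem⟩ := exists_linearIndependent_fin_of_finrank_span_eq _ hdim
  choose a ha using fun i => (hv_mem i).1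
  choose m hm using fun i => (hv_mem i).2
  have ha_periods : ∀ i, a i ∈ periods (pN ∘ (Kᵀ).mulVecLin) := fun i =>
    periods_comap_le pN (Kᵀ).mulVecLin.toAddMonoidHom <| by
      simp only [AddSubgroup.mem_comap, LinearMap.toAddMonoidHom_coe, mulVecLin_apply, ha, hm]
      exact periodic_intVec_of_periodic_single (fun j y => hper y j) (m i)
  refine ⟨a, LinearIndependent.of_comp (Kᵀ).mulVecLin ?_, fun x n => ?_⟩
  · have hcomp : (Kᵀ).mulVecLin ∘ a = v := funext ha
    rwa [hcomp]
  · have hsum : ∑ j, (n j : ℝ) • a j ∈ periods (pN ∘ (Kᵀ).mulVecLin) := by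
      simp only [Int.cast_smul_eq_zsmul]
      exact AddSubgroup.sum_mem _ fun j _ => AddSubgroup.zsmul_mem _ (ha_periods j) _
    exact hsum x

/-- If a `2π`-periodic (in each coordinate) function `pN` on `ℝ^N` is restricted to the
range of `Kᵀ` for a full-rank `d × N` matrix `K`, and the span of
`range(Kᵀ) ∩ (2π)ℤ^N` has dimension `d`, then `p_d(x) = pN(Kᵀ x)` is periodic with
`d` linearly independent periods. -/
theorem stmt_0 {d N : ℕ} (pN : (Fin N → ℝ) → ℂ)
    (hper : ∀ (y : Fin N → ℝ) (j : Fin N), pN (y + (2 * π) • (Pi.single j 1 : Fin N → ℝ)) = pN y)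
    (K : Matrix (Fin d) (Fin N) ℝ) (hrank : K.rank = d)
    (hdim : Module.finrank ℝ (Submodule.span ℝ
      ({v | (∃ x : Fin d → ℝ, (Kᵀ).mulVec x = v) ∧
        (∃ n : Fin N → ℤ, v = fun j => 2 * π * (n j : ℝ))} : Set (Fin N → ℝ))) = d) :
    ∃ a : Fin d → (Fin d → ℝ), LinearIndependent ℝ a ∧
      ∀ (x : Fin d → ℝ) (n : Fin d → ℤ),
        pN ((Kᵀ).mulVec (x + ∑ j, (n j : ℝ) • a j)) = pN ((Kᵀ).mulVec x) :=
  stmt_0_general pN hper K hdim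
end

section
/- Let Q(x) = M(x)* A M(x) where M(x) is defined via the matrix K and A is Hermitian, and let ψ(x; u) = u* Q(x) u. For any x₀ ∈ ℝ^N and ε ∈ ℝ^N, the translation identity Q(x₀ + ε) = exp(i D(Kᵀε))* Q(x₀) exp(i D(Kᵀε)) holds, where D(γ) = diag(γ, -γ). -/
open Matrix Complex

/-- The diagonal unitary `exp(i D(γ))` with `D(γ) = diag(γ, -γ)`. -/
noncomputable def expD {N : ℕ} (γ : Fin N → ℝ) :
    Matrix (Fin N ⊕ Fin N) (Fin N ⊕ Fin N) ℂ :=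
  Matrix.diagonal (Sum.elim (fun j => Complex.exp (I * (γ j : ℝ)))
    (fun j => Complex.exp (-(I * (γ j : ℝ)))))

/-- The `(N+1) × 2N` matrix `M(x) = [M₊(x), M₋(x)]` with
`M₊(x) = [exp(i xᵀK); i K diag(exp(i xᵀK))]` and
`M₋(x) = [exp(-i xᵀK); -i K diag(exp(-i xᵀK))]`. -/
noncomputable def Mmat {N : ℕ} (K : Matrix (Fin N) (Fin N) ℝ) (x : Fin N → ℝ) :
    Matrix (Fin (N + 1)) (Fin N ⊕ Fin N) ℂ :=
  Matrix.of fun i j => Sum.elim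
    (fun j1 => (Fin.cons (Complex.exp (I * (((Kᵀ).mulVec x) j1 : ℝ)))
      (fun r : Fin N => I * (K r j1 : ℝ) *
        Complex.exp (I * (((Kᵀ).mulVec x) j1 : ℝ))) : Fin (N + 1) → ℂ) i)
    (fun j2 => (Fin.cons (Complex.exp (-(I * (((Kᵀ).mulVec x) j2 : ℝ))))
      (fun r : Fin N => -(I * (K r j2 : ℝ)) *
        Complex.exp (-(I * (((Kᵀ).mulVec x) j2 : ℝ)))) : Fin (N + 1) → ℂ) i) j

lemma Mmat_add {N : ℕ} (K : Matrix (Fin N) (Fin N) ℝ) (x₀ ε : Fin N → ℝ) :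
    Mmat K (x₀ + ε) = Mmat K x₀ * expD ((Kᵀ).mulVec ε) := by
  ext i j
  rw [expD, Matrix.mul_diagonal]
  cases j with
  | inl j1 =>
    simp only [Mmat, Matrix.of_apply, Sum.elim_inl, Matrix.mulVec_add, Pi.add_apply]
    induction i using Fin.cases with
    | zero => simp [push_cast, mul_add, Complex.exp_add]
    | succ r =>
      simp only [Fin.cons_succ]
      push_cast
      rw [mul_add, Complex.exp_add]
      ring
  | inr j2 =>
    simp only [Mmat, Matrix.of_apply, Sum.elim_inr, Matrix.mulVec_add, Pi.add_apply]
    induction i using Fin.cases with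
    | zero =>
      simp only [Fin.cons_zero]
      push_cast
      rw [mul_add, neg_add, Complex.exp_add]
    | succ r =>
      simp only [Fin.cons_succ]
      push_cast
      rw [mul_add, neg_add, Complex.exp_add]
      ring

/-- Translation identity for `Q(x) = M(x)* A M(x)`:
`Q(x₀+ε) = exp(i D(Kᵀε))* Q(x₀) exp(i D(Kᵀε))`. -/
theorem stmt_6 {N : ℕ} (K : Matrix (Fin N) (Fin N) ℝ)
    (A : Matrix (Fin (N + 1)) (Fin (N + 1)) ℂ) (hA : A.IsHermitian)
    (Q : (Fin N → ℝ) → Matrix (Fin N ⊕ Fin N) (Fin N ⊕ Fin N) ℂ)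
    (hQ : ∀ x, Q x = (Mmat K x)ᴴ * A * Mmat K x)
    (x₀ ε : Fin N → ℝ) :
    Q (x₀ + ε) = (expD ((Kᵀ).mulVec ε))ᴴ * Q x₀ * expD ((Kᵀ).mulVec ε) := by
  rw [hQ, hQ, Mmat_add, Matrix.conjTranspose_mul]
  simp only [Matrix.mul_assoc]
end

section
/- Let Q₀ be a 2N×2N Hermitian matrix with smallest eigenvalue λ, K ∈ ℝ^{N×N}, and suppose u ∈ ℂ^{2N} satisfies Q₀u = λu. Then the N×N matrix H = 2[K,-K] ( diag(ū) Q₀ diag(u) - Re[diag(ū) diag(Q₀u)] ) [Kᵀ;-Kᵀ] is positive semidefinite. -/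
open Matrix Complex

/-- If `u` is an eigenvector of the Hermitian matrix `Q₀` associated with its smallest
eigenvalue `λ`, then the Hessian matrix
`H = 2[K,-K](diag(ū) Q₀ diag(u) - Re[diag(ū) diag(Q₀u)])[Kᵀ;-Kᵀ]` is positive
semidefinite. -/
theorem stmt_10 {N : ℕ} (K : Matrix (Fin N) (Fin N) ℝ)
    (Q₀ : Matrix (Fin N ⊕ Fin N) (Fin N ⊕ Fin N) ℂ) (hQ₀ : Q₀.IsHermitian)
    (u : Fin N ⊕ Fin N → ℂ) (lam : ℝ) (heig : Q₀.mulVec u = (lam : ℂ) • u)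
    (hmin : ∀ v : Fin N ⊕ Fin N → ℂ,
      lam * ∑ k, Complex.normSq (v k) ≤ (star v ⬝ᵥ Q₀.mulVec v).re)
    (B : Matrix (Fin N ⊕ Fin N) (Fin N ⊕ Fin N) ℂ)
    (hB : B = Matrix.diagonal (star u) * Q₀ * Matrix.diagonal u -
      (Matrix.diagonal (star u) * Matrix.diagonal (Q₀.mulVec u)).map
        (fun z => ((z.re : ℝ) : ℂ)))
    (H : Matrix (Fin N) (Fin N) ℂ)
    (hH : H = fun j l => 2 * ∑ k : Fin N ⊕ Fin N, ∑ k' : Fin N ⊕ Fin N,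
      ((Sum.elim (fun m => K j m) (fun m => -(K j m)) k : ℝ) : ℂ) * B k k' *
        ((Sum.elim (fun m => K l m) (fun m => -(K l m)) k' : ℝ) : ℂ)) :
    ∀ w : Fin N → ℝ, 0 ≤ (∑ j, ∑ l, ((w j : ℝ) : ℂ) * H j l * ((w l : ℝ) : ℂ)).re := by
  intro w
  set σ : Fin N → (Fin N ⊕ Fin N) → ℝ :=
    fun j => Sum.elim (fun m => K j m) (fun m => -(K j m)) with hσ
  set s : (Fin N ⊕ Fin N) → ℝ := fun k => ∑ j, w j * σ j k with hs
  set v : (Fin N ⊕ Fin N) → ℂ := fun k => (s k : ℂ) * u k with hv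
  have hBent : ∀ k k', B k k' = (starRingEnd ℂ) (u k) * Q₀ k k' * u k' -
      (if k = k' then ((lam * Complex.normSq (u k) : ℝ) : ℂ) else 0) := by
    intro k k'
    subst hB
    by_cases h : k = k'
    · subst h
      have h2 : (starRingEnd ℂ) (u k) * ((lam : ℂ) * u k) = (lam : ℂ) * ((Complex.normSq (u k) : ℝ) : ℂ) := by
        rw [← Complex.mul_conj (u k)]; ring
      simp only [Matrix.sub_apply, Matrix.map_apply, Matrix.diagonal_mul_diagonal,
        Matrix.diagonal_apply_eq, Matrix.mul_diagonal, Matrix.diagonal_mul, heig,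
        Pi.smul_apply, smul_eq_mul, Pi.star_apply, Pi.mul_apply, RCLike.star_def, if_pos rfl, h2]
      push_cast
      simp
    · simp [Matrix.sub_apply, Matrix.map_apply, Matrix.diagonal_mul_diagonal,
        Matrix.diagonal_apply_ne _ h, Matrix.diagonal_mul, Matrix.mul_diagonal, h]
  set c : Fin N → ℂ := fun j => ((w j : ℝ) : ℂ) with hc
  set M : Matrix (Fin N) (Fin N ⊕ Fin N) ℂ := Matrix.of (fun j k => ((σ j k : ℝ) : ℂ)) with hM
  set sc : (Fin N ⊕ Fin N) → ℂ := fun k => ((s k : ℝ) : ℂ) with hsc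
  have hHM : H = (2 : ℂ) • (M * B * Mᵀ) := by
    rw [hH]; ext j l
    simp only [Matrix.smul_apply, Matrix.mul_apply, Matrix.transpose_apply, Matrix.of_apply,
      smul_eq_mul, Finset.sum_mul, hM, hσ]
    rw [Finset.sum_comm]
  have hLHS : (∑ j, ∑ l, ((w j : ℝ) : ℂ) * H j l * ((w l : ℝ) : ℂ)) = c ⬝ᵥ H.mulVec c := by
    simp [dotProduct, Matrix.mulVec, Finset.mul_sum, hc, mul_assoc]
  have hvc : M.vecMul c = sc := by
    funext k
    simp only [Matrix.vecMul, dotProduct, hM, Matrix.of_apply, hc, hsc, hs]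
    push_cast
    apply Finset.sum_congr rfl; intro j _; ring
  have hMt : Mᵀ.mulVec c = sc := by
    funext k
    simp only [Matrix.mulVec, dotProduct, Matrix.transpose_apply, hM, Matrix.of_apply, hc, hsc, hs]
    push_cast
    apply Finset.sum_congr rfl; intro j _; ring
  have hmid : c ⬝ᵥ H.mulVec c = 2 * (sc ⬝ᵥ B.mulVec sc) := by
    rw [hHM]
    rw [Matrix.smul_mulVec, dotProduct_smul]
    congr 1
    rw [← Matrix.mulVec_mulVec, ← Matrix.mulVec_mulVec, Matrix.dotProduct_mulVec, hvc, hMt]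
  have hfin : sc ⬝ᵥ B.mulVec sc
      = star v ⬝ᵥ Q₀.mulVec v - ((lam * ∑ k, Complex.normSq (v k) : ℝ) : ℂ) := by
    have e1 : sc ⬝ᵥ B.mulVec sc = ∑ k, ∑ k', sc k * (B k k' * sc k') := by
      simp only [dotProduct, Matrix.mulVec, Finset.mul_sum]
    rw [e1]
    have e2 : ∀ k k', sc k * (B k k' * sc k')
        = star v k * (Q₀ k k' * v k')
          - (if k = k' then ((lam * Complex.normSq (v k) : ℝ) : ℂ) else 0) := by
      intro k k'
      rw [hBent]
      by_cases h : k = k'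
      · subst h
        simp only [if_pos rfl, hv, hsc, Pi.star_apply, star_mul', Complex.star_def,
          Complex.conj_ofReal, Complex.normSq_mul, Complex.normSq_ofReal]
        push_cast
        rw [← Complex.mul_conj (u k)]
        ring
      · simp only [if_neg h, hv, hsc, Pi.star_apply, star_mul', Complex.star_def,
          Complex.conj_ofReal]
        ring
    calc (∑ k, ∑ k', sc k * (B k k' * sc k'))
        = ∑ k, ∑ k', (star v k * (Q₀ k k' * v k')
            - (if k = k' then ((lam * Complex.normSq (v k) : ℝ) : ℂ) else 0)) := by
          exact Finset.sum_congr rfl fun k _ => Finset.sum_congr rfl fun k' _ => e2 k k'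
      _ = (∑ k, ∑ k', star v k * (Q₀ k k' * v k'))
            - ∑ k, ((lam * Complex.normSq (v k) : ℝ) : ℂ) := by
          rw [← Finset.sum_sub_distrib]
          apply Finset.sum_congr rfl; intro k _
          rw [Finset.sum_sub_distrib]
          simp
      _ = star v ⬝ᵥ Q₀.mulVec v - ((lam * ∑ k, Complex.normSq (v k) : ℝ) : ℂ) := by
          congr 1
          · simp only [dotProduct, Matrix.mulVec, Finset.mul_sum, Pi.star_apply]
          · push_cast [Finset.mul_sum]; rfl
  rw [hLHS, hmid, hfin]
  have hm := hmin v
  simp only [mul_sub, Complex.sub_re, Complex.mul_re, Complex.re_ofNat, Complex.im_ofNat,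
    Complex.ofReal_re, Complex.ofReal_im]
  nlinarith [hm]
end
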